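/- arXiv:1609.09380 — 4 statements merged into one kernel-verified Lean document; each statement's English description precedes it below -/
import Mathlib

section
/- Let X, Y be real-valued random variables with finite first moments, and let (X',Y'), (X'',Y'') be independent copies of (X,Y). Then E[|X-X'||Y-Y'|] - 2 E[|X-X'||Y-Y''|] + E[|X-X'|] E[|Y-Y'|] = E[U(X,X') V(Y,Y')], where U(x,x') = |x-x'| - E|x-X'| - E|X-x'| + E|X-X'| and V(y,y') = |y-y'| - E|y-Y'| - E|Y-y'| + E|Y-Y'|. -/
/-!
Let `ν` be the law of `(X, Y)` and let `ã`, `b̃` be the double centerings, with respect to `ν`,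
of the kernels `a(p, q) = |p.1 - q.1|` and `b(p, q) = |p.2 - q.2|`; then
`U(X, X') = ã((X, Y), (X', Y'))` and `V(Y, Y') = b̃((X, Y), (X', Y'))`. Independence identifies
the laws of the pair and of the triple of copies with `ν ⊗ ν` and `ν ⊗ ν ⊗ ν`, so everything
becomes an identity for product measures. There, `b̃` integrates to zero in each variable
separately, which kills every term of `ã` that depends on at most one variable:
`∫ ã b̃ = ∫ a b̃`. Expanding `b̃`, both cross terms `∫ a(p, q) b̄(p)` and `∫ a(p, q) b̄(q)`, where
`b̄` is the row mean of `b`, equal `E|X - X'||Y - Y''|`, by Fubini and the symmetry of `a`.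
-/

open MeasureTheory ProbabilityTheory Function

theorem MeasureTheory.Integrable.prod_swap_right {α β γ E : Type*} [MeasurableSpace α]
    [MeasurableSpace β] [MeasurableSpace γ] [NormedAddCommGroup E] {μ : Measure α}
    {ν : Measure β} {ρ : Measure γ} [SFinite μ] [SFinite ν] [SFinite ρ] {f : (α × β) × γ → E}
    (hf : Integrable f ((μ.prod ν).prod ρ)) :
    Integrable (fun x : (α × γ) × β => f ((x.1.1, x.2), x.1.2)) ((μ.prod ρ).prod ν) := by
  let e : (α × γ) × β ≃ᵐ (α × β) × γ := MeasurableEquiv.prodAssoc.trans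
    (((MeasurableEquiv.refl α).prodCongr MeasurableEquiv.prodComm).trans
      MeasurableEquiv.prodAssoc.symm)
  have he : MeasurePreserving e ((μ.prod ρ).prod ν) ((μ.prod ν).prod ρ) :=
    ((measurePreserving_prodAssoc μ ν ρ).symm _).comp
      (((MeasurePreserving.id μ).prod Measure.measurePreserving_swap).comp
        (measurePreserving_prodAssoc μ ρ ν))
  exact (he.integrable_comp_emb e.measurableEmbedding).2 hf

namespace DistanceCovariance

variable {α : Type*} [MeasurableSpace α]

section Definitions

variable (ν : Measure α) (k : α → α → ℝ)

noncomputable def rowMean (p : α) : ℝ := ∫ q, k p q ∂ν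

noncomputable def grandMean : ℝ := ∫ w, k w.1 w.2 ∂(ν.prod ν)

noncomputable def doubleCenter (p q : α) : ℝ :=
  k p q - rowMean ν k p - rowMean ν k q + grandMean ν k

end Definitions

variable {ν : Measure α} {k a b : α → α → ℝ}

theorem doubleCenter_comm (hk : ∀ p q, k p q = k q p) (p q : α) :
    doubleCenter ν k p q = doubleCenter ν k q p := by
  simp only [doubleCenter, hk p q]; ring

theorem integrable_mul_doubleCenter {f : α × α → ℝ}
    (h₁ : Integrable (fun w => f w * k w.1 w.2) (ν.prod ν))
    (h₂ : Integrable (fun w => f w * rowMean ν k w.1) (ν.prod ν))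
    (h₃ : Integrable (fun w => f w * rowMean ν k w.2) (ν.prod ν))
    (h₄ : Integrable f (ν.prod ν)) :
    Integrable (fun w => f w * doubleCenter ν k w.1 w.2) (ν.prod ν) := by
  refine (((h₁.sub h₂).sub h₃).add (h₄.const_mul (grandMean ν k))).congr
    (.of_forall fun w => ?_)
  simp only [Pi.add_apply, Pi.sub_apply, doubleCenter]; ring

theorem integral_mul_doubleCenter {f : α × α → ℝ}
    (h₁ : Integrable (fun w => f w * k w.1 w.2) (ν.prod ν))
    (h₂ : Integrable (fun w => f w * rowMean ν k w.1) (ν.prod ν))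
    (h₃ : Integrable (fun w => f w * rowMean ν k w.2) (ν.prod ν))
    (h₄ : Integrable f (ν.prod ν)) :
    ∫ w, f w * doubleCenter ν k w.1 w.2 ∂(ν.prod ν) =
      ∫ w, f w * k w.1 w.2 ∂(ν.prod ν) - ∫ w, f w * rowMean ν k w.1 ∂(ν.prod ν)
        - ∫ w, f w * rowMean ν k w.2 ∂(ν.prod ν) + grandMean ν k * ∫ w, f w ∂(ν.prod ν) := by
  have h₁₂ : Integrable (fun w => f w * k w.1 w.2 - f w * rowMean ν k w.1) (ν.prod ν) :=
    h₁.sub h₂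
  have h₁₂₃ : Integrable (fun w => f w * k w.1 w.2 - f w * rowMean ν k w.1
      - f w * rowMean ν k w.2) (ν.prod ν) := h₁₂.sub h₃
  rw [← integral_sub h₁ h₂, ← integral_sub h₁₂ h₃, ← integral_const_mul,
    ← integral_add h₁₂₃ (h₄.const_mul _)]
  congr 1 with w
  simp only [doubleCenter]; ring

variable [IsProbabilityMeasure ν]

theorem integrable_rowMean (hk : Integrable (uncurry k) (ν.prod ν)) :
    Integrable (rowMean ν k) ν :=
  hk.integral_prod_left

theorem integral_rowMean (hk : Integrable (uncurry k) (ν.prod ν)) :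
    ∫ p, rowMean ν k p ∂ν = grandMean ν k :=
  (integral_prod _ hk).symm

theorem integrable_doubleCenter (hk : Integrable (uncurry k) (ν.prod ν)) :
    Integrable (uncurry (doubleCenter ν k)) (ν.prod ν) :=
  ((hk.sub ((integrable_rowMean hk).comp_fst ν)).sub
    ((integrable_rowMean hk).comp_snd ν)).add (integrable_const _)

theorem integral_doubleCenter_right_ae (hk : Integrable (uncurry k) (ν.prod ν)) :
    ∀ᵐ p ∂ν, ∫ q, doubleCenter ν k p q ∂ν = 0 := by
  filter_upwards [hk.prod_right_ae] with p (hp : Integrable (fun q => k p q) ν)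
  have hp' : Integrable (fun q => k p q - rowMean ν k p) ν := hp.sub (integrable_const _)
  have hrow := integrable_rowMean hk
  have hsub : Integrable (fun q => k p q - rowMean ν k p - rowMean ν k q) ν := hp'.sub hrow
  simp only [doubleCenter]
  rw [integral_add hsub (integrable_const _), integral_sub hp' hrow,
    integral_sub hp (integrable_const _), integral_rowMean hk]
  simp [rowMean]

theorem integral_fst_mul_doubleCenter_eq_zero (hk : Integrable (uncurry k) (ν.prod ν))
    (g : α → ℝ)
    (hg : Integrable (fun w : α × α => g w.1 * doubleCenter ν k w.1 w.2) (ν.prod ν)) :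
    ∫ w, g w.1 * doubleCenter ν k w.1 w.2 ∂(ν.prod ν) = 0 := by
  rw [integral_prod _ hg]
  refine (integral_congr_ae ?_).trans (integral_zero α ℝ)
  dsimp only
  filter_upwards [integral_doubleCenter_right_ae hk] with p hp
  rw [integral_const_mul, hp, mul_zero]

theorem integral_snd_mul_doubleCenter_eq_zero (hk_symm : ∀ p q, k p q = k q p)
    (hk : Integrable (uncurry k) (ν.prod ν)) (g : α → ℝ)
    (hg : Integrable (fun w : α × α => g w.2 * doubleCenter ν k w.1 w.2) (ν.prod ν)) :
    ∫ w, g w.2 * doubleCenter ν k w.1 w.2 ∂(ν.prod ν) = 0 := by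
  set F : α × α → ℝ := fun w => g w.1 * doubleCenter ν k w.1 w.2
  have hF : (fun w : α × α => g w.2 * doubleCenter ν k w.1 w.2) = fun w => F w.swap :=
    funext fun w => by simp only [F, Prod.fst_swap, Prod.snd_swap,
      doubleCenter_comm hk_symm w.1 w.2]
  rw [hF] at hg ⊢
  rw [integral_prod_swap F]
  exact integral_fst_mul_doubleCenter_eq_zero hk g (integrable_swap_iff.mp hg)

theorem integrable_mul_rowMean_fst
    (habb : Integrable (fun x : (α × α) × α => a x.1.1 x.1.2 * b x.1.1 x.2) ((ν.prod ν).prod ν)) :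
    Integrable (fun w : α × α => a w.1 w.2 * rowMean ν b w.1) (ν.prod ν) :=
  habb.integral_prod_left.congr (.of_forall fun _ => by simp only [rowMean, integral_const_mul])

theorem integral_mul_rowMean_fst
    (habb : Integrable (fun x : (α × α) × α => a x.1.1 x.1.2 * b x.1.1 x.2) ((ν.prod ν).prod ν)) :
    ∫ w, a w.1 w.2 * rowMean ν b w.1 ∂(ν.prod ν) =
      ∫ x, a x.1.1 x.1.2 * b x.1.1 x.2 ∂((ν.prod ν).prod ν) := by
  rw [integral_prod _ habb]
  exact integral_congr_ae (.of_forall fun _ => (integral_const_mul _ _).symm)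

theorem integrable_mul_rowMean_snd (ha_symm : ∀ p q, a p q = a q p)
    (habb : Integrable (fun x : (α × α) × α => a x.1.1 x.1.2 * b x.1.1 x.2) ((ν.prod ν).prod ν)) :
    Integrable (fun w : α × α => a w.1 w.2 * rowMean ν b w.2) (ν.prod ν) :=
  (integrable_mul_rowMean_fst habb).swap.congr (.of_forall fun w => by
    simp only [Function.comp, Prod.fst_swap, Prod.snd_swap, ha_symm w.2 w.1])

theorem integral_mul_rowMean_snd (ha_symm : ∀ p q, a p q = a q p)
    (habb : Integrable (fun x : (α × α) × α => a x.1.1 x.1.2 * b x.1.1 x.2) ((ν.prod ν).prod ν)) :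
    ∫ w, a w.1 w.2 * rowMean ν b w.2 ∂(ν.prod ν) =
      ∫ x, a x.1.1 x.1.2 * b x.1.1 x.2 ∂((ν.prod ν).prod ν) := by
  rw [← integral_mul_rowMean_fst habb, ← integral_prod_swap]
  simp only [Prod.fst_swap, Prod.snd_swap, ha_symm]

theorem integrable_rowMean_fst_mul
    (habb : Integrable (fun x : (α × α) × α => a x.1.1 x.1.2 * b x.1.1 x.2) ((ν.prod ν).prod ν)) :
    Integrable (fun w : α × α => rowMean ν a w.1 * b w.1 w.2) (ν.prod ν) :=
  habb.prod_swap_right.integral_prod_left.congr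
    (.of_forall fun _ => by simp only [rowMean, integral_mul_const])

theorem integrable_rowMean_mul_rowMean
    (habb : Integrable (fun x : (α × α) × α => a x.1.1 x.1.2 * b x.1.1 x.2) ((ν.prod ν).prod ν)) :
    Integrable (fun p => rowMean ν a p * rowMean ν b p) ν :=
  (integrable_rowMean_fst_mul habb).integral_prod_left.congr
    (.of_forall fun _ => by simp only [rowMean, integral_const_mul])

theorem integrable_rowMean_fst_mul_doubleCenter (ha : Integrable (uncurry a) (ν.prod ν))
    (hb : Integrable (uncurry b) (ν.prod ν))
    (habb : Integrable (fun x : (α × α) × α => a x.1.1 x.1.2 * b x.1.1 x.2) ((ν.prod ν).prod ν)) :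
    Integrable (fun w : α × α => rowMean ν a w.1 * doubleCenter ν b w.1 w.2) (ν.prod ν) :=
  integrable_mul_doubleCenter (integrable_rowMean_fst_mul habb)
    ((integrable_rowMean_mul_rowMean habb).comp_fst ν)
    ((integrable_rowMean ha).mul_prod (integrable_rowMean hb))
    ((integrable_rowMean ha).comp_fst ν)

theorem integrable_rowMean_snd_mul_doubleCenter (hb_symm : ∀ p q, b p q = b q p)
    (ha : Integrable (uncurry a) (ν.prod ν)) (hb : Integrable (uncurry b) (ν.prod ν))
    (habb : Integrable (fun x : (α × α) × α => a x.1.1 x.1.2 * b x.1.1 x.2) ((ν.prod ν).prod ν)) :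
    Integrable (fun w : α × α => rowMean ν a w.2 * doubleCenter ν b w.1 w.2) (ν.prod ν) :=
  (integrable_rowMean_fst_mul_doubleCenter ha hb habb).swap.congr (.of_forall fun w => by
    simp only [Function.comp, Prod.fst_swap, Prod.snd_swap, doubleCenter_comm hb_symm w.2 w.1])

theorem integrable_kernel_mul_doubleCenter (ha_symm : ∀ p q, a p q = a q p)
    (ha : Integrable (uncurry a) (ν.prod ν))
    (hab : Integrable (fun w : α × α => a w.1 w.2 * b w.1 w.2) (ν.prod ν))
    (habb : Integrable (fun x : (α × α) × α => a x.1.1 x.1.2 * b x.1.1 x.2) ((ν.prod ν).prod ν)) :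
    Integrable (fun w : α × α => a w.1 w.2 * doubleCenter ν b w.1 w.2) (ν.prod ν) :=
  integrable_mul_doubleCenter hab (integrable_mul_rowMean_fst habb)
    (integrable_mul_rowMean_snd ha_symm habb) ha

theorem integrable_doubleCenter_mul_doubleCenter (ha_symm : ∀ p q, a p q = a q p)
    (hb_symm : ∀ p q, b p q = b q p)
    (ha : Integrable (uncurry a) (ν.prod ν)) (hb : Integrable (uncurry b) (ν.prod ν))
    (hab : Integrable (fun w : α × α => a w.1 w.2 * b w.1 w.2) (ν.prod ν))
    (habb : Integrable (fun x : (α × α) × α => a x.1.1 x.1.2 * b x.1.1 x.2) ((ν.prod ν).prod ν)) :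
    Integrable (fun w : α × α => doubleCenter ν a w.1 w.2 * doubleCenter ν b w.1 w.2)
      (ν.prod ν) := by
  refine ((((integrable_kernel_mul_doubleCenter ha_symm ha hab habb).sub
    (integrable_rowMean_fst_mul_doubleCenter ha hb habb)).sub
    (integrable_rowMean_snd_mul_doubleCenter hb_symm ha hb habb)).add
    ((integrable_doubleCenter hb).const_mul (grandMean ν a))).congr (.of_forall fun w => ?_)
  simp only [Pi.add_apply, Pi.sub_apply, uncurry, doubleCenter]; ring

theorem integral_doubleCenter_mul_doubleCenter (ha_symm : ∀ p q, a p q = a q p)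
    (hb_symm : ∀ p q, b p q = b q p)
    (ha : Integrable (uncurry a) (ν.prod ν)) (hb : Integrable (uncurry b) (ν.prod ν))
    (hab : Integrable (fun w : α × α => a w.1 w.2 * b w.1 w.2) (ν.prod ν))
    (habb : Integrable (fun x : (α × α) × α => a x.1.1 x.1.2 * b x.1.1 x.2) ((ν.prod ν).prod ν)) :
    ∫ w, doubleCenter ν a w.1 w.2 * doubleCenter ν b w.1 w.2 ∂(ν.prod ν) =
      ∫ w, a w.1 w.2 * b w.1 w.2 ∂(ν.prod ν)
        - 2 * ∫ x, a x.1.1 x.1.2 * b x.1.1 x.2 ∂((ν.prod ν).prod ν)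
        + grandMean ν a * grandMean ν b := by
  have h₁ := integrable_kernel_mul_doubleCenter ha_symm ha hab habb
  have h₂ := integrable_rowMean_fst_mul_doubleCenter ha hb habb
  have h₃ := integrable_rowMean_snd_mul_doubleCenter hb_symm ha hb habb
  have h₄ : Integrable (fun w : α × α => grandMean ν a * doubleCenter ν b w.1 w.2) (ν.prod ν) :=
    (integrable_doubleCenter hb).const_mul _
  have h₁₂ : Integrable (fun w : α × α => a w.1 w.2 * doubleCenter ν b w.1 w.2
      - rowMean ν a w.1 * doubleCenter ν b w.1 w.2) (ν.prod ν) := h₁.sub h₂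
  have h₁₂₃ : Integrable (fun w : α × α => a w.1 w.2 * doubleCenter ν b w.1 w.2
      - rowMean ν a w.1 * doubleCenter ν b w.1 w.2
      - rowMean ν a w.2 * doubleCenter ν b w.1 w.2) (ν.prod ν) := h₁₂.sub h₃
  have hconst := integral_fst_mul_doubleCenter_eq_zero hb (fun _ => grandMean ν a) h₄
  calc _ = ∫ w, a w.1 w.2 * doubleCenter ν b w.1 w.2 ∂(ν.prod ν)
        - ∫ w, rowMean ν a w.1 * doubleCenter ν b w.1 w.2 ∂(ν.prod ν)
        - ∫ w, rowMean ν a w.2 * doubleCenter ν b w.1 w.2 ∂(ν.prod ν)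
        + ∫ w, grandMean ν a * doubleCenter ν b w.1 w.2 ∂(ν.prod ν) := by
        rw [← integral_sub h₁ h₂, ← integral_sub h₁₂ h₃, ← integral_add h₁₂₃ h₄]
        congr 1 with w
        simp only [doubleCenter]; ring
    _ = ∫ w, a w.1 w.2 * doubleCenter ν b w.1 w.2 ∂(ν.prod ν) := by
        rw [integral_fst_mul_doubleCenter_eq_zero hb _ h₂,
          integral_snd_mul_doubleCenter_eq_zero hb_symm hb _ h₃, hconst]
        ring
    _ = _ := by
        rw [integral_mul_doubleCenter hab (integrable_mul_rowMean_fst habb)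
          (integrable_mul_rowMean_snd ha_symm habb) ha, integral_mul_rowMean_fst habb,
          integral_mul_rowMean_snd ha_symm habb,
          show ∫ w, a w.1 w.2 ∂(ν.prod ν) = grandMean ν a from rfl]
        ring

section Transfer

variable {Ω β : Type*} [MeasurableSpace Ω] [MeasurableSpace β] {μ : Measure Ω}

theorem integral_eq_of_map_eq {W : Ω → β} {ρ : Measure β} (hW : AEMeasurable W μ)
    (h : μ.map W = ρ) {F : β → ℝ} (hF : AEStronglyMeasurable F ρ) :
    ∫ x, F x ∂ρ = ∫ ω, F (W ω) ∂μ := by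
  subst h; exact integral_map hW hF

theorem integrable_of_map_eq {W : Ω → β} {ρ : Measure β} (hW : AEMeasurable W μ)
    (h : μ.map W = ρ) {F : β → ℝ} (hF : AEStronglyMeasurable F ρ)
    (hFW : Integrable (fun ω => F (W ω)) μ) : Integrable F ρ := by
  subst h; exact (integrable_map_measure hF hW).2 hFW

variable {Z Z' Z'' : Ω → α}

theorem indepFun_pair_of_iIndepFun (hZ : Measurable Z) (hZ' : Measurable Z')
    (hZ'' : Measurable Z'') (h : iIndepFun ![Z, Z', Z''] μ) :
    IndepFun Z Z' μ ∧ IndepFun (fun ω => (Z ω, Z' ω)) Z'' μ := by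
  have hmeas : ∀ i, Measurable (![Z, Z', Z''] i) := by
    intro i
    fin_cases i
    exacts [hZ, hZ', hZ'']
  exact ⟨by simpa using h.indepFun (show (0 : Fin 3) ≠ 1 by decide),
    by simpa using h.indepFun_prodMk hmeas 0 1 2 (by decide) (by decide)⟩

theorem rowMean_map (hZ : AEMeasurable Z μ) (hk : Measurable (uncurry k)) (p : α) :
    rowMean (μ.map Z) k p = ∫ ω, k p (Z ω) ∂μ :=
  integral_map hZ hk.of_uncurry_left.aestronglyMeasurable

section

variable [IsFiniteMeasure μ]

theorem map_prodMk_eq_prod (hid : IdentDistrib Z Z' μ μ) (hind : IndepFun Z Z' μ) :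
    μ.map (fun ω => (Z ω, Z' ω)) = (μ.map Z).prod (μ.map Z) := by
  rw [(indepFun_iff_map_prod_eq_prod_map_map hid.aemeasurable_fst hid.aemeasurable_snd).mp hind,
    hid.map_eq]

theorem grandMean_map (hid : IdentDistrib Z Z' μ μ) (hind : IndepFun Z Z' μ)
    (hk : Measurable (uncurry k)) :
    grandMean (μ.map Z) k = ∫ ω, k (Z ω) (Z' ω) ∂μ :=
  integral_eq_of_map_eq (hid.aemeasurable_fst.prodMk hid.aemeasurable_snd)
    (map_prodMk_eq_prod hid hind) hk.aestronglyMeasurable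

theorem doubleCenter_map (hk_symm : ∀ p q, k p q = k q p) (hid : IdentDistrib Z Z' μ μ)
    (hind : IndepFun Z Z' μ) (hk : Measurable (uncurry k)) (p q : α) :
    doubleCenter (μ.map Z) k p q = k p q - ∫ ω, k p (Z' ω) ∂μ - ∫ ω, k (Z ω) q ∂μ
      + ∫ ω, k (Z ω) (Z' ω) ∂μ := by
  have hp : rowMean (μ.map Z) k p = ∫ ω, k p (Z' ω) ∂μ := by
    rw [hid.map_eq]; exact rowMean_map hid.aemeasurable_snd hk p
  have hq : rowMean (μ.map Z) k q = ∫ ω, k (Z ω) q ∂μ := by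
    simp only [rowMean_map hid.aemeasurable_fst hk, hk_symm q]
  rw [doubleCenter, hp, hq, grandMean_map hid hind hk]

end

theorem integral_doubleCenter_mul_doubleCenter_map [IsProbabilityMeasure μ]
    (hid' : IdentDistrib Z Z' μ μ) (hid'' : IdentDistrib Z Z'' μ μ) (h01 : IndepFun Z Z' μ)
    (h012 : IndepFun (fun ω => (Z ω, Z' ω)) Z'' μ)
    (ha_meas : Measurable (uncurry a)) (hb_meas : Measurable (uncurry b))
    (ha_symm : ∀ p q, a p q = a q p) (hb_symm : ∀ p q, b p q = b q p)
    (ha : Integrable (fun ω => a (Z ω) (Z' ω)) μ) (hb : Integrable (fun ω => b (Z ω) (Z' ω)) μ)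
    (hab : Integrable (fun ω => a (Z ω) (Z' ω) * b (Z ω) (Z' ω)) μ)
    (habb : Integrable (fun ω => a (Z ω) (Z' ω) * b (Z ω) (Z'' ω)) μ) :
    ∫ ω, doubleCenter (μ.map Z) a (Z ω) (Z' ω) * doubleCenter (μ.map Z) b (Z ω) (Z' ω) ∂μ =
      ∫ ω, a (Z ω) (Z' ω) * b (Z ω) (Z' ω) ∂μ - 2 * ∫ ω, a (Z ω) (Z' ω) * b (Z ω) (Z'' ω) ∂μ
        + (∫ ω, a (Z ω) (Z' ω) ∂μ) * ∫ ω, b (Z ω) (Z' ω) ∂μ := by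
  set ν := μ.map Z
  have : IsProbabilityMeasure ν := Measure.isProbabilityMeasure_map hid'.aemeasurable_fst
  have hW₂ : AEMeasurable (fun ω => (Z ω, Z' ω)) μ :=
    hid'.aemeasurable_fst.prodMk hid'.aemeasurable_snd
  have hW₃ : AEMeasurable (fun ω => ((Z ω, Z' ω), Z'' ω)) μ :=
    hW₂.prodMk hid''.aemeasurable_snd
  have hpair : μ.map (fun ω => (Z ω, Z' ω)) = ν.prod ν := map_prodMk_eq_prod hid' h01
  have htriple : μ.map (fun ω => ((Z ω, Z' ω), Z'' ω)) = (ν.prod ν).prod ν := by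
    rw [(indepFun_iff_map_prod_eq_prod_map_map hW₂ hid''.aemeasurable_snd).mp h012, hpair,
      ← hid''.map_eq]
  have hab_meas : Measurable (fun w : α × α => a w.1 w.2 * b w.1 w.2) := ha_meas.mul hb_meas
  have habb_meas : Measurable (fun x : (α × α) × α => a x.1.1 x.1.2 * b x.1.1 x.2) :=
    (ha_meas.comp measurable_fst).mul (hb_meas.comp (measurable_fst.fst.prodMk measurable_snd))
  have ha' := integrable_of_map_eq hW₂ hpair ha_meas.aestronglyMeasurable ha
  have hb' := integrable_of_map_eq hW₂ hpair hb_meas.aestronglyMeasurable hb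
  have hab' := integrable_of_map_eq hW₂ hpair hab_meas.aestronglyMeasurable hab
  have habb' := integrable_of_map_eq hW₃ htriple habb_meas.aestronglyMeasurable habb
  rw [← integral_eq_of_map_eq hW₂ hpair (integrable_doubleCenter_mul_doubleCenter
      ha_symm hb_symm ha' hb' hab' habb').aestronglyMeasurable,
    integral_doubleCenter_mul_doubleCenter ha_symm hb_symm ha' hb' hab' habb',
    integral_eq_of_map_eq hW₂ hpair hab_meas.aestronglyMeasurable,
    integral_eq_of_map_eq hW₃ htriple habb_meas.aestronglyMeasurable,
    grandMean_map hid' h01 ha_meas, grandMean_map hid' h01 hb_meas]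

end Transfer

end DistanceCovariance

open DistanceCovariance

/-- For integrable real random variables `X, Y` with i.i.d. copies
`(X',Y'), (X'',Y'')` (the three pairs mutually independent),
`E|X-X'||Y-Y'| - 2 E|X-X'||Y-Y''| + E|X-X'| E|Y-Y'| = E[U(X,X') V(Y,Y')]`,
where `U, V` are the double-centered distance functions. -/
theorem stmt0
    {Ω : Type*} [MeasurableSpace Ω] (μ : Measure Ω) [IsProbabilityMeasure μ]
    (X Y X' Y' X'' Y'' : Ω → ℝ)
    (hmX : Measurable X) (hmY : Measurable Y) (hmX' : Measurable X')
    (hmY' : Measurable Y') (hmX'' : Measurable X'') (hmY'' : Measurable Y'')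
    (hid' : IdentDistrib (fun ω => (X ω, Y ω)) (fun ω => (X' ω, Y' ω)) μ μ)
    (hid'' : IdentDistrib (fun ω => (X ω, Y ω)) (fun ω => (X'' ω, Y'' ω)) μ μ)
    (hindep : iIndepFun
      ![fun ω => (X ω, Y ω), fun ω => (X' ω, Y' ω), fun ω => (X'' ω, Y'' ω)] μ)
    (hX : Integrable X μ) (hY : Integrable Y μ)
    (h1 : Integrable (fun ω => |X ω - X' ω| * |Y ω - Y' ω|) μ)
    (h2 : Integrable (fun ω => |X ω - X' ω| * |Y ω - Y'' ω|) μ)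
    (U V : ℝ → ℝ → ℝ)
    (hU : ∀ x x', U x x' = |x - x'| - (∫ ω, |x - X' ω| ∂μ) - (∫ ω, |X ω - x'| ∂μ)
      + ∫ ω, |X ω - X' ω| ∂μ)
    (hV : ∀ y y', V y y' = |y - y'| - (∫ ω, |y - Y' ω| ∂μ) - (∫ ω, |Y ω - y'| ∂μ)
      + ∫ ω, |Y ω - Y' ω| ∂μ) :
    (∫ ω, |X ω - X' ω| * |Y ω - Y' ω| ∂μ)
      - 2 * (∫ ω, |X ω - X' ω| * |Y ω - Y'' ω| ∂μ)
      + (∫ ω, |X ω - X' ω| ∂μ) * (∫ ω, |Y ω - Y' ω| ∂μ)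
      = ∫ ω, U (X ω) (X' ω) * V (Y ω) (Y' ω) ∂μ := by
  obtain ⟨h01, h012⟩ := indepFun_pair_of_iIndepFun (hmX.prodMk hmY) (hmX'.prodMk hmY')
    (hmX''.prodMk hmY'') hindep
  have hX' : Integrable X' μ := (hid'.comp measurable_fst).integrable_iff.mp hX
  have hY' : Integrable Y' μ := (hid'.comp measurable_snd).integrable_iff.mp hY
  have hdX : Measurable (uncurry fun p q : ℝ × ℝ => |p.1 - q.1|) := by
    unfold uncurry; fun_prop
  have hdY : Measurable (uncurry fun p q : ℝ × ℝ => |p.2 - q.2|) := by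
    unfold uncurry; fun_prop
  have hU' : ∀ ω, U (X ω) (X' ω) = doubleCenter (μ.map fun ω => (X ω, Y ω))
      (fun p q => |p.1 - q.1|) (X ω, Y ω) (X' ω, Y' ω) := fun ω => by
    rw [hU, doubleCenter_map (fun _ _ => abs_sub_comm _ _) hid' h01 hdX]
  have hV' : ∀ ω, V (Y ω) (Y' ω) = doubleCenter (μ.map fun ω => (X ω, Y ω))
      (fun p q => |p.2 - q.2|) (X ω, Y ω) (X' ω, Y' ω) := fun ω => by
    rw [hV, doubleCenter_map (fun _ _ => abs_sub_comm _ _) hid' h01 hdY]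
  simp_rw [hU', hV']
  exact (integral_doubleCenter_mul_doubleCenter_map hid' hid'' h01 h012 hdX hdY
    (fun _ _ => abs_sub_comm _ _) (fun _ _ => abs_sub_comm _ _)
    (hX.sub hX').abs (hY.sub hY').abs h1 h2).symm
end

section
/- For a square-integrable real random variable X (not almost surely constant) with independent copy X', the distance variance dCov²(X) = E[U(X,X')²] > 0, and dCov²(X) = 0 if and only if X is almost surely constant. -/
/-!
With `a t = E|t - X|` and `m = E|X - X'|`, `U x x' = |x - x'| - a x - a x' + m` is square
integrable, so `dCov²(X) = 0` forces `|x - x'| = g x + g x'` for `law X ⊗ law X`-almost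
all `(x, x')`, where `g = a - m / 2`. If the law had two support points `p < q`, picking
`x, x'` near `p` and `y, y'` near `q` at which this holds and combining the four identities gives
`|x - x'| + |y - y'| = |x - y'| + |y - x'|`, impossible when `x, x' < y, y'`.
-/

open MeasureTheory ProbabilityTheory Set Filter

lemma abs_sub_add_abs_sub_lt {m x x' y y' : ℝ} (hx : x < m) (hx' : x' < m)
    (hy : m < y) (hy' : m < y') :
    |x - x'| + |y - y'| < |x - y'| + |y - x'| := by
  rw [abs_of_neg (a := x - y') (by linarith), abs_of_pos (a := y - x') (by linarith)]
  cases abs_cases (x - x') <;> cases abs_cases (y - y') <;> linarith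

namespace MeasureTheory.Measure

variable {α : Type*} [TopologicalSpace α] [MeasurableSpace α] [HereditarilyLindelofSpace α]
  [Nonempty α] {ν : Measure α}

lemma support_nontrivial_of_not_ae_eq_const (h : ¬ ∃ c, ∀ᵐ x ∂ν, x = c) :
    ν.support.Nontrivial := by
  rw [← not_subsingleton_iff]
  intro hsub
  rcases ν.support.eq_empty_or_nonempty with hempty | ⟨c, hc⟩
  · exact h ⟨Classical.arbitrary α, by simp_all⟩
  · exact h ⟨c, by filter_upwards [support_mem_ae] with x hx using hsub hx hc⟩

end MeasureTheory.Measure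

lemma exists_ae_eq_const_of_ae_abs_sub_eq_add {ν : Measure ℝ} [SFinite ν] {g : ℝ → ℝ}
    (h : ∀ᵐ p ∂ν.prod ν, |p.1 - p.2| = g p.1 + g p.2) : ∃ c, ∀ᵐ x ∂ν, x = c := by
  by_contra hν
  obtain ⟨p, hp, q, hq, hpq⟩ := (Measure.support_nontrivial_of_not_ae_eq_const hν).exists_lt
  obtain ⟨m, hpm, hmq⟩ := exists_between hpq
  have hlow : ν (Iio m) ≠ 0 :=
    ((Measure.mem_support_iff_forall p).1 hp _ (Iio_mem_nhds hpm)).ne'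
  have hhigh : ν (Ioi m) ≠ 0 :=
    ((Measure.mem_support_iff_forall q).1 hq _ (Ioi_mem_nhds hmq)).ne'
  have hG := Measure.ae_ae_of_ae_prod h
  obtain ⟨x, hx, hxG⟩ := Measure.exists_mem_of_measure_ne_zero_of_ae hlow (ae_restrict_of_ae hG)
  obtain ⟨y, hy, hyG⟩ :=
    Measure.exists_mem_of_measure_ne_zero_of_ae hhigh (ae_restrict_of_ae hG)
  obtain ⟨x', hx', hxx', hyx'⟩ :=
    Measure.exists_mem_of_measure_ne_zero_of_ae hlow (ae_restrict_of_ae (hxG.and hyG))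
  obtain ⟨y', hy', hxy', hyy'⟩ :=
    Measure.exists_mem_of_measure_ne_zero_of_ae hhigh (ae_restrict_of_ae (hxG.and hyG))
  have := abs_sub_add_abs_sub_lt hx hx' hy hy'
  simp only at hxx' hyx' hxy' hyy'
  linarith

section

variable {Ω : Type*} [MeasurableSpace Ω] {μ : Measure Ω}

lemma LipschitzWith.memLp_comp {E F : Type*} [IsFiniteMeasure μ] [NormedAddCommGroup E]
    [NormedAddCommGroup F] {p : ENNReal} {K : NNReal} {g : E → F}
    (hg : LipschitzWith K g) {f : Ω → E} (hf : MemLp f p μ) :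
    MemLp (fun ω => g (f ω)) p μ := by
  have h0 : LipschitzWith K fun x => g x - g 0 := by
    simpa using hg.sub (LipschitzWith.const (g 0))
  convert (h0.comp_memLp (by simp) hf).add (memLp_const (g 0)) using 1
  funext ω
  simp

lemma integral_sq_eq_zero_iff {f : Ω → ℝ} (hf : MemLp f 2 μ) :
    ∫ ω, f ω ^ 2 ∂μ = 0 ↔ f =ᵐ[μ] 0 := by
  rw [integral_eq_zero_iff_of_nonneg (fun ω => sq_nonneg (f ω)) hf.integrable_sq]
  simp [EventuallyEq]

lemma lipschitzWith_one_integral_abs_sub [IsProbabilityMeasure μ] {X : Ω → ℝ}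
    (hX : Integrable X μ) : LipschitzWith 1 fun t => ∫ ω, |t - X ω| ∂μ := by
  have hint : ∀ t, Integrable (fun ω => |t - X ω|) μ :=
    fun t => ((integrable_const t).sub hX).abs
  refine LipschitzWith.of_le_add fun s t => ?_
  calc ∫ ω, |s - X ω| ∂μ ≤ ∫ ω, (|t - X ω| + dist s t) ∂μ :=
        integral_mono (hint s) ((hint t).add (integrable_const _)) fun ω => by
          rw [Real.dist_eq, add_comm]; exact abs_sub_le s t (X ω)
    _ = ∫ ω, |t - X ω| ∂μ + dist s t := by
        rw [integral_add (hint t) (integrable_const _), integral_const]; simp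

lemma exists_ae_eq_const_of_ae_abs_sub_eq_add_of_iid [IsFiniteMeasure μ] {X X' : Ω → ℝ}
    (hmX : Measurable X) (hmX' : Measurable X') (hid : IdentDistrib X X' μ μ)
    (hindep : IndepFun X X' μ) {g : ℝ → ℝ} (hg : Measurable g)
    (h : ∀ᵐ ω ∂μ, |X ω - X' ω| = g (X ω) + g (X' ω)) :
    ∃ c, X =ᵐ[μ] fun _ => c := by
  have hprod : μ.map (fun ω => (X ω, X' ω)) = (μ.map X).prod (μ.map X) := by
    rw [(indepFun_iff_map_prod_eq_prod_map_map hmX.aemeasurable hmX'.aemeasurable).1 hindep,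
      hid.map_eq]
  have hae : ∀ᵐ p ∂(μ.map X).prod (μ.map X), |p.1 - p.2| = g p.1 + g p.2 := by
    rwa [← hprod, ae_map_iff (hmX.prodMk hmX').aemeasurable
      (measurableSet_eq_fun (by fun_prop) (by fun_prop))]
  obtain ⟨c, hc⟩ := exists_ae_eq_const_of_ae_abs_sub_eq_add hae
  exact ⟨c, ae_of_ae_map hmX.aemeasurable hc⟩

end

/-- For a square-integrable real random variable `X` with independent
copy `X'`, the distance variance `dCov²(X) = E[U(X,X')²]` is positive whenever `X` is
not a.s. constant, and it vanishes if and only if `X` is a.s. constant. -/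
theorem stmt4
    {Ω : Type*} [MeasurableSpace Ω] (μ : Measure Ω) [IsProbabilityMeasure μ]
    (X X' : Ω → ℝ) (hmX : Measurable X) (hmX' : Measurable X')
    (hid : IdentDistrib X X' μ μ) (hindep : IndepFun X X' μ)
    (hL2 : MemLp X 2 μ)
    (U : ℝ → ℝ → ℝ)
    (hU : ∀ x x', U x x' = |x - x'| - (∫ ω, |x - X' ω| ∂μ) - (∫ ω, |X ω - x'| ∂μ)
      + ∫ ω, |X ω - X' ω| ∂μ) :
    ((¬ ∃ c : ℝ, X =ᵐ[μ] fun _ => c) → 0 < ∫ ω, (U (X ω) (X' ω)) ^ 2 ∂μ) ∧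
      ((∫ ω, (U (X ω) (X' ω)) ^ 2 ∂μ) = 0 ↔ ∃ c : ℝ, X =ᵐ[μ] fun _ => c) := by
  set a : ℝ → ℝ := fun t => ∫ ω, |t - X ω| ∂μ
  set m := ∫ ω, |X ω - X' ω| ∂μ
  have hL2' : MemLp X' 2 μ := hid.memLp_snd hL2
  have ha : LipschitzWith 1 a := lipschitzWith_one_integral_abs_sub (hL2.integrable one_le_two)
  have hU' : ∀ x x', U x x' = |x - x'| - a x - a x' + m := by
    intro x x'
    have h₁ : ∫ ω, |x - X' ω| ∂μ = a x :=
      (hid.comp (measurable_const.sub measurable_id).abs).integral_eq.symm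
    have h₂ : ∫ ω, |X ω - x'| ∂μ = a x' := by simp_rw [a, abs_sub_comm (X _)]
    rw [hU, h₁, h₂]
  have hmem : MemLp (fun ω => U (X ω) (X' ω)) 2 μ := by
    simp_rw [hU']
    exact (((hL2.sub hL2').abs.sub (ha.memLp_comp hL2)).sub (ha.memLp_comp hL2')).add
      (memLp_const m)
  have hzero : ∫ ω, U (X ω) (X' ω) ^ 2 ∂μ = 0 ↔ ∃ c : ℝ, X =ᵐ[μ] fun _ => c := by
    rw [integral_sq_eq_zero_iff hmem]
    constructor
    · intro h
      refine exists_ae_eq_const_of_ae_abs_sub_eq_add_of_iid hmX hmX' hid hindep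
        (g := fun t => a t - m / 2) (ha.continuous.sub continuous_const).measurable ?_
      filter_upwards [h] with ω hω
      rw [Pi.zero_apply, hU'] at hω
      linarith
    · rintro ⟨c, hc⟩
      have hc' : X' =ᵐ[μ] fun _ => c := hid.ae_snd (measurableSet_singleton c) hc
      have hac : a c = 0 := integral_eq_zero_of_ae (hc.mono fun ω hω => by simp [hω])
      have hm : m = 0 := integral_eq_zero_of_ae ((hc.and hc').mono fun ω hω => by simp [hω])
      filter_upwards [hc, hc'] with ω h₁ h₂
      simp [h₁, h₂, hU', hac, hm]
  refine ⟨fun hnc => ?_, hzero⟩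
  exact (integral_nonneg fun ω => sq_nonneg _).lt_of_ne fun h => hnc (hzero.1 h.symm)
end

section
/- Define f(ρ) = (4/π)[ρ·arcsin(ρ) + √(1-ρ²) − ρ·arcsin(ρ/2) − √(4-ρ²) + 1] for ρ ∈ [-1,1]. Then f(0) = 0, f(ρ) ≥ 0 for all ρ, and there exist positive constants c₁, c₂ such that c₁ ρ² ≤ f(ρ) ≤ c₂ ρ² for all ρ ∈ [-1,1]. -/
/-! With `F t = t arcsin t + √(1 - t²)`, an antiderivative of `arcsin`, the bracket in `f ρ` is
`F ρ - 2 F (ρ / 2) + 1`: it vanishes at `0`, is even, and has derivative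
`arcsin ρ - arcsin (ρ / 2)`. On `[0, 1]` the bounds `t ≤ arcsin t ≤ (π / 2) t` squeeze this
derivative between `(1 - π / 4) ρ` and `(π / 2) ρ`; integrating gives the two quadratic bounds. -/

open Real Set

theorem hasDerivAt_half_mul_sq (c x : ℝ) : HasDerivAt (fun y => c / 2 * y ^ 2) (c * x) x :=
  ((hasDerivAt_pow 2 x).const_mul (c / 2)).congr_deriv (by push_cast; ring)

theorem half_mul_sq_le_of_mul_le_deriv {φ φ' : ℝ → ℝ} {b c : ℝ} (h₀ : φ 0 = 0)
    (hφ : ContinuousOn φ (Icc 0 b)) (hφ' : ∀ x ∈ Ico 0 b, HasDerivAt φ (φ' x) x)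
    (hle : ∀ x ∈ Ico 0 b, c * x ≤ φ' x) : ∀ x ∈ Icc 0 b, c / 2 * x ^ 2 ≤ φ x :=
  image_le_of_deriv_right_le_deriv_boundary (by fun_prop)
    (fun x _ => (hasDerivAt_half_mul_sq c x).hasDerivWithinAt) (by simp [h₀]) hφ
    (fun x hx => (hφ' x hx).hasDerivWithinAt) hle

theorem le_half_mul_sq_of_deriv_le_mul {φ φ' : ℝ → ℝ} {b c : ℝ} (h₀ : φ 0 = 0)
    (hφ : ContinuousOn φ (Icc 0 b)) (hφ' : ∀ x ∈ Ico 0 b, HasDerivAt φ (φ' x) x)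
    (hle : ∀ x ∈ Ico 0 b, φ' x ≤ c * x) : ∀ x ∈ Icc 0 b, φ x ≤ c / 2 * x ^ 2 :=
  image_le_of_deriv_right_le_deriv_boundary hφ
    (fun x hx => (hφ' x hx).hasDerivWithinAt) (by simp [h₀]) (by fun_prop)
    (fun x _ => (hasDerivAt_half_mul_sq c x).hasDerivWithinAt) hle

namespace Real

theorem le_arcsin_self {x : ℝ} (h₀ : 0 ≤ x) (h₁ : x ≤ 1) : x ≤ arcsin x := by
  simpa [sin_arcsin (by linarith) h₁] using sin_le (arcsin_nonneg.2 h₀)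

theorem arcsin_le_pi_div_two_mul {x : ℝ} (h₀ : 0 ≤ x) (h₁ : x ≤ 1) :
    arcsin x ≤ π / 2 * x := by
  have h := mul_le_sin (arcsin_nonneg.2 h₀) (arcsin_le_pi_div_two x)
  rw [sin_arcsin (by linarith) h₁, div_mul_eq_mul_div, div_le_iff₀ pi_pos] at h
  linarith

end Real

noncomputable def arcsinAntideriv (t : ℝ) : ℝ := t * arcsin t + √(1 - t ^ 2)

theorem continuous_arcsinAntideriv : Continuous arcsinAntideriv := by
  have := continuous_arcsin
  unfold arcsinAntideriv
  fun_prop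

theorem hasDerivAt_arcsinAntideriv {t : ℝ} (h₁ : -1 < t) (h₂ : t < 1) :
    HasDerivAt arcsinAntideriv (arcsin t) t := by
  have hpos : 0 < 1 - t ^ 2 := by nlinarith
  have h : HasDerivAt (fun y => y * arcsin y + √(1 - y ^ 2))
      (1 * arcsin t + t * (1 / √(1 - t ^ 2)) + (0 - 2 * t) / (2 * √(1 - t ^ 2))) t := by
    refine ((hasDerivAt_id' t).mul (hasDerivAt_arcsin h₁.ne' h₂.ne)).add
      (((hasDerivAt_const t 1).sub ?_).sqrt hpos.ne')
    simpa using hasDerivAt_pow 2 t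
  refine h.congr_deriv ?_
  field_simp
  ring

/-- `π / 4` times the squared distance covariance of a standard Gaussian pair with
correlation `x`. -/
noncomputable def dcovProfile (x : ℝ) : ℝ := arcsinAntideriv x - 2 * arcsinAntideriv (x / 2) + 1

theorem dcovProfile_eq (x : ℝ) : dcovProfile x =
    x * arcsin x + √(1 - x ^ 2) - x * arcsin (x / 2) - √(4 - x ^ 2) + 1 := by
  have h4 : √(4 - x ^ 2) = 2 * √(1 - (x / 2) ^ 2) := by
    rw [show 4 - x ^ 2 = 2 ^ 2 * (1 - (x / 2) ^ 2) by ring, sqrt_mul (by norm_num),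
      sqrt_sq zero_le_two]
  rw [dcovProfile, arcsinAntideriv, arcsinAntideriv, h4]
  ring

theorem dcovProfile_zero : dcovProfile 0 = 0 := by
  norm_num [dcovProfile, arcsinAntideriv]

theorem dcovProfile_abs (x : ℝ) : dcovProfile |x| = dcovProfile x := by
  rcases abs_choice x with h | h <;> rw [h]
  simp only [dcovProfile, arcsinAntideriv, neg_div, arcsin_neg, neg_sq]
  ring

theorem continuous_dcovProfile : Continuous dcovProfile := by
  have := continuous_arcsinAntideriv
  unfold dcovProfile
  fun_prop

theorem hasDerivAt_dcovProfile {x : ℝ} (h₁ : -1 < x) (h₂ : x < 1) :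
    HasDerivAt dcovProfile (arcsin x - arcsin (x / 2)) x := by
  have h := ((hasDerivAt_arcsinAntideriv h₁ h₂).sub
    (((hasDerivAt_arcsinAntideriv (by linarith) (by linarith)).comp x
      ((hasDerivAt_id' x).div_const 2)).const_mul 2)).add_const 1
  exact h.congr_deriv (by ring)

theorem dcovProfile_bounds_of_nonneg {x : ℝ} (hx : x ∈ Icc 0 1) :
    (1 - π / 4) / 2 * x ^ 2 ≤ dcovProfile x ∧ dcovProfile x ≤ π / 2 / 2 * x ^ 2 := by
  have hderiv : ∀ y ∈ Ico (0 : ℝ) 1, HasDerivAt dcovProfile (arcsin y - arcsin (y / 2)) y :=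
    fun y hy => hasDerivAt_dcovProfile (by linarith [hy.1]) hy.2
  refine ⟨half_mul_sq_le_of_mul_le_deriv dcovProfile_zero continuous_dcovProfile.continuousOn
    hderiv (fun y hy => ?_) x hx, le_half_mul_sq_of_deriv_le_mul dcovProfile_zero
    continuous_dcovProfile.continuousOn hderiv (fun y hy => ?_) x hx⟩
  · have := le_arcsin_self hy.1 hy.2.le
    have := arcsin_le_pi_div_two_mul (x := y / 2) (by linarith [hy.1]) (by linarith [hy.2])
    linarith
  · have := arcsin_le_pi_div_two_mul hy.1 hy.2.le
    have := arcsin_nonneg.2 (show 0 ≤ y / 2 by linarith [hy.1])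
    linarith

theorem dcovProfile_bounds {x : ℝ} (hx : x ∈ Icc (-1) 1) :
    (1 - π / 4) / 2 * x ^ 2 ≤ dcovProfile x ∧ dcovProfile x ≤ π / 2 / 2 * x ^ 2 := by
  simpa only [dcovProfile_abs, sq_abs] using
    dcovProfile_bounds_of_nonneg ⟨abs_nonneg x, abs_le.2 hx⟩

/-- For
`f(ρ) = (4/π)[ρ·arcsin ρ + √(1-ρ²) − ρ·arcsin(ρ/2) − √(4-ρ²) + 1]` on `[-1,1]`:
`f(0) = 0`, `f ≥ 0`, and `f` is comparable to `ρ²` from above and below. -/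
theorem stmt6
    (f : ℝ → ℝ)
    (hf : ∀ ρ, f ρ = (4 / π) * (ρ * arcsin ρ + Real.sqrt (1 - ρ ^ 2)
      - ρ * arcsin (ρ / 2) - Real.sqrt (4 - ρ ^ 2) + 1)) :
    f 0 = 0 ∧ (∀ ρ ∈ Set.Icc (-1 : ℝ) 1, 0 ≤ f ρ) ∧
      ∃ c₁ c₂ : ℝ, 0 < c₁ ∧ 0 < c₂ ∧
        ∀ ρ ∈ Set.Icc (-1 : ℝ) 1, c₁ * ρ ^ 2 ≤ f ρ ∧ f ρ ≤ c₂ * ρ ^ 2 := by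
  have hf' (ρ : ℝ) : f ρ = 4 / π * dcovProfile ρ := by rw [hf, dcovProfile_eq]
  have hπ₀ : 0 < 4 / π := by positivity
  have hc₁ : 0 < (1 - π / 4) / 2 := by linarith [pi_lt_d2]
  have hbounds (ρ : ℝ) (hρ : ρ ∈ Icc (-1 : ℝ) 1) :
      4 / π * ((1 - π / 4) / 2) * ρ ^ 2 ≤ f ρ ∧ f ρ ≤ 4 / π * (π / 2 / 2) * ρ ^ 2 := by
    obtain ⟨hlo, hhi⟩ := dcovProfile_bounds hρ
    rw [hf', mul_assoc, mul_assoc]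
    exact ⟨mul_le_mul_of_nonneg_left hlo hπ₀.le, mul_le_mul_of_nonneg_left hhi hπ₀.le⟩
  refine ⟨by rw [hf', dcovProfile_zero, mul_zero], fun ρ hρ => ?_, _, _,
    mul_pos hπ₀ hc₁, by positivity, hbounds⟩
  exact (mul_nonneg (mul_pos hπ₀ hc₁).le (sq_nonneg ρ)).trans (hbounds ρ hρ).1
end

section
/- The multivariate distance covariance MdCov does not completely characterize mutual independence: if W^(1) is degenerate at 0 and (W^(2),...,W^(p)) are dependent, then MdCov²(W;a) = 0 while W^(1),...,W^(p) are not mutually independent. -/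
open MeasureTheory ProbabilityTheory

/-!
For `a > 0` we have `K 0 w' = 0 ^ a = 0`, so a coordinate that is almost surely `0` kills every
product in the three terms of `MdCov²`, and all of them vanish. Mutual independence, on the other
hand, passes to subfamilies, so the full family cannot be independent when its tail is not.
-/

section MdCov

variable {Ω ι E : Type*} [MeasurableSpace Ω] [Fintype ι]

/-- `MdCov²(W)` with a common kernel `K`; the middle term `E[∏ᵢ K(W_{2i-1}^(i), W_{2i}^(i))]`
factorises into a product because the copies `W_j` are independent. -/
noncomputable def mdCovSq (μ : Measure Ω) (K : E → E → ℝ) (W : Ω → ι → E) : ℝ :=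
  (∫ ω, ∫ ω', ∏ i, K (W ω i) (W ω' i) ∂μ ∂μ)
    + (∏ i, ∫ ω, ∫ ω', K (W ω i) (W ω' i) ∂μ ∂μ)
    - 2 * ∫ ω, ∏ i, ∫ ω', K (W ω i) (W ω' i) ∂μ ∂μ

lemma mdCovSq_eq_zero_of_ae_kernel_eq_zero {μ : Measure Ω} {K : E → E → ℝ} {W : Ω → ι → E}
    (i₀ : ι) (h : ∀ᵐ ω ∂μ, ∀ w', K (W ω i₀) w' = 0) : mdCovSq μ K W = 0 := by
  have hinner : ∀ᵐ ω ∂μ, ∫ ω', K (W ω i₀) (W ω' i₀) ∂μ = 0 :=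
    h.mono fun ω hω => by simp only [hω, integral_zero]
  have hjoint : ∫ ω, ∫ ω', ∏ i, K (W ω i) (W ω' i) ∂μ ∂μ = 0 :=
    integral_eq_zero_of_ae <| h.mono fun ω hω => by
      have hprod (ω' : Ω) : ∏ i, K (W ω i) (W ω' i) = 0 :=
        Finset.prod_eq_zero (Finset.mem_univ i₀) (hω _)
      simp only [hprod, integral_zero, Pi.zero_apply]
  have hmarginal : ∏ i, ∫ ω, ∫ ω', K (W ω i) (W ω' i) ∂μ ∂μ = 0 :=
    Finset.prod_eq_zero (Finset.mem_univ i₀) (integral_eq_zero_of_ae hinner)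
  have hmixed : ∫ ω, ∏ i, ∫ ω', K (W ω i) (W ω' i) ∂μ ∂μ = 0 :=
    integral_eq_zero_of_ae <| hinner.mono fun ω hω => Finset.prod_eq_zero (Finset.mem_univ i₀) hω
  simp [mdCovSq, hjoint, hmarginal, hmixed]

end MdCov

theorem stmt11_general
    {Ω : Type*} [MeasurableSpace Ω] (μ : Measure Ω)
    {p : ℕ} (W : Ω → Fin (p + 1) → ℝ)
    (a : ℝ) (ha : 0 < a)
    (K : ℝ → ℝ → ℝ) (hK : ∀ w w', K w w' = |w| ^ a + |w'| ^ a - |w - w'| ^ a)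
    (hdeg : ∀ᵐ ω ∂μ, W ω 0 = 0)
    (hdep : ¬ iIndepFun
      (fun (i : Fin p) ω => W ω i.succ) μ) :
    ((∫ ω, ∫ ω', ∏ i : Fin (p + 1), K (W ω i) (W ω' i) ∂μ ∂μ)
        + (∏ i : Fin (p + 1), ∫ ω, ∫ ω', K (W ω i) (W ω' i) ∂μ ∂μ)
        - 2 * ∫ ω, ∏ i : Fin (p + 1), ∫ ω', K (W ω i) (W ω' i) ∂μ ∂μ) = 0 ∧
      ¬ iIndepFun
        (fun (i : Fin (p + 1)) ω => W ω i) μ := by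
  have hK0 : ∀ w', K 0 w' = 0 := fun w' => by simp [hK, Real.zero_rpow ha.ne']
  exact ⟨mdCovSq_eq_zero_of_ae_kernel_eq_zero 0 (hdeg.mono fun ω hω w' => hω ▸ hK0 w'),
    fun hindep => hdep (hindep.precomp (Fin.succ_injective p))⟩

/-- MdCov does not completely characterize mutual independence: if the
first coordinate `W^(1)` is degenerate at `0` and the remaining coordinates are
dependent, then `MdCov²(W;a) = 0` (each term of the V-statistic representation
vanishes, since `K(0,0) = 0`) while the coordinates are not mutually independent. -/
theorem stmt11
    {Ω : Type*} [MeasurableSpace Ω] (μ : Measure Ω) [IsProbabilityMeasure μ]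
    {p : ℕ} (W : Ω → Fin (p + 1) → ℝ) (hmW : Measurable W)
    (a : ℝ) (ha : 0 < a) (ha2 : a < 2)
    (K : ℝ → ℝ → ℝ) (hK : ∀ w w', K w w' = |w| ^ a + |w'| ^ a - |w - w'| ^ a)
    (hdeg : ∀ᵐ ω ∂μ, W ω 0 = 0)
    (hdep : ¬ iIndepFun
      (fun (i : Fin p) ω => W ω i.succ) μ) :
    ((∫ ω, ∫ ω', ∏ i : Fin (p + 1), K (W ω i) (W ω' i) ∂μ ∂μ)
        + (∏ i : Fin (p + 1), ∫ ω, ∫ ω', K (W ω i) (W ω' i) ∂μ ∂μ)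
        - 2 * ∫ ω, ∏ i : Fin (p + 1), ∫ ω', K (W ω i) (W ω' i) ∂μ ∂μ) = 0 ∧
      ¬ iIndepFun
        (fun (i : Fin (p + 1)) ω => W ω i) μ :=
  stmt11_general μ W a ha K hK hdeg hdep
end
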